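/- For all integers n ≥ 0 and j ≥ 0, d_{4j+3}(4n + 3) ≡ 0 (mod 4). -/

import Mathlib

/-!
Modulo 4 we have `(1 - q^m)^4 ≡ (1 - q^(2m))^2`, so for `k = 4j + 3` the generating function of
`d_k` is congruent to `T = 1 / (f₁² f₂^(2j+1))`, where `f_c = ∏ (1 - q^(cm))`. The Euler operator
`θ = q d/dq` gives `θT = 2T(L₁ + (2j+1)L₂)` with the Lambert series `L_c = ∑ m q^(cm)/(1 - q^(cm))`,
so `3 tₙ = 2 [T(L₁ + (2j+1)L₂)]ₙ` in `ZMod 4` when `n ≡ 3 (mod 4)`, and it suffices that this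
last coefficient is even. Modulo 2, Frobenius gives `T ≡ 1/f₄^(j+1)`, a series in `q^4`; `L₂` lives
on even exponents, and the coefficient `σ(a)` of `q^a` in `L₁` is even for `a ≡ 3 (mod 4)`, since
such an `a` is not a square and all its divisors are odd. All products are truncated at `m ≤ n`,
which does not change coefficients up to `q^n`.
-/

/-- `ElongatedDiamondGF d` says that for every `k ≥ 1`, the sequence `d k` satisfies the
formal power series identity `∑_{n≥0} d_k(n) q^n = ∏_{m≥1} (1 − q^{2m})^k / ∏_{m≥1} (1 − q^m)^{3k+1}`
in `ℤ[[q]]`, i.e. `(∑_{n≥0} d_k(n) q^n) · ∏_{m≥1} (1 − q^m)^{3k+1} = ∏_{m≥1} (1 − q^{2m})^k`.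
Since the factors with `m > n` do not affect the coefficient of `q^n`, this infinite-product
identity is encoded coefficient-wise via the truncated (finite) products over `1 ≤ m ≤ n`.
Combinatorially, `d k n` counts the partitions obtained by adding the links of the
`k`-elongated plane partition diamonds of length `n`. -/
def ElongatedDiamondGF (d : ℕ → ℕ → ℤ) : Prop :=
  ∀ k : ℕ, 1 ≤ k → ∀ n : ℕ,
    (PowerSeries.coeff (R := ℤ) n)
        ((PowerSeries.mk fun i => d k i) *
          ∏ m ∈ Finset.Icc 1 n, (1 - PowerSeries.X ^ m) ^ (3 * k + 1)) =
      (PowerSeries.coeff (R := ℤ) n) (∏ m ∈ Finset.Icc 1 n, (1 - PowerSeries.X ^ (2 * m)) ^ k)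

open PowerSeries Finset

namespace Derivation

variable {R A : Type*} [CommRing R] [CommRing A] [Algebra R A] (D : Derivation R A A)

theorem map_pow_of_eq_mul {a u : A} (h : D a = a * u) (n : ℕ) :
    D (a ^ n) = a ^ n * (n * u) := by
  induction n with
  | zero => simp
  | succ n ih =>
    rw [pow_succ, leibniz, ih, h, smul_eq_mul, smul_eq_mul]
    push_cast
    ring

theorem map_prod_of_eq_mul {ι : Type*} (s : Finset ι) {f u : ι → A}
    (h : ∀ i ∈ s, D (f i) = f i * u i) : D (∏ i ∈ s, f i) = (∏ i ∈ s, f i) * ∑ i ∈ s, u i := by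
  classical
  induction s using Finset.induction_on with
  | empty => simp
  | insert a s ha ih =>
    rw [prod_insert ha, sum_insert ha, leibniz, smul_eq_mul, smul_eq_mul,
      ih fun i hi => h i (mem_insert_of_mem hi), h a (mem_insert_self a s)]
    ring

end Derivation

theorem Nat.sum_divisors_cast_zmod_two_eq_zero {n : ℕ} (hn : n % 4 = 3) :
    ∑ m ∈ n.divisors, (m : ZMod 2) = 0 := by
  have hn0 : n ≠ 0 := by omega
  have hodd : ∀ m ∈ n.divisors, (m : ZMod 2) = 1 := fun m hm =>
    ZMod.natCast_eq_one_iff_odd.2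
      ((Nat.odd_iff.2 (by omega)).of_dvd_nat (Nat.dvd_of_mem_divisors hm))
  have hmem : ∀ m ∈ n.divisors, n / m ∈ n.divisors := fun m hm =>
    Nat.mem_divisors.2 ⟨Nat.div_dvd_of_dvd (Nat.dvd_of_mem_divisors hm), hn0⟩
  refine sum_involution (fun m _ => n / m) (fun m hm => ?_) (fun m hm _ hfix => ?_) hmem
    (fun m hm => Nat.div_div_self (Nat.dvd_of_mem_divisors hm) hn0)
  · rw [hodd m hm, hodd _ (hmem m hm)]; rfl
  · have hsq := Nat.div_mul_cancel (Nat.dvd_of_mem_divisors hm)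
    rw [hfix] at hsq
    have := Nat.mul_mod m m 4
    have : m % 4 < 4 := Nat.mod_lt _ (by norm_num)
    interval_cases m % 4 <;> omega

namespace PowerSeries

variable {R : Type*} [CommRing R]

theorem X_pow_dvd_one_sub_X_pow_pow_sub_one {m n : ℕ} (h : m ≤ n) (e : ℕ) :
    (X : R⟦X⟧) ^ m ∣ (1 - X ^ n) ^ e - 1 := by
  have h1 := sub_dvd_pow_sub_pow (1 - X ^ n : R⟦X⟧) 1 e
  rw [one_pow, sub_sub_cancel_left, neg_dvd] at h1
  exact (pow_dvd_pow X h).trans h1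

theorem coeff_mul_prod_Icc_of_le {F : ℕ → R⟦X⟧} (hF : ∀ m, X ^ m ∣ F m - 1) (A : R⟦X⟧)
    {i N : ℕ} (hi : i ≤ N) :
    coeff i (A * ∏ m ∈ Icc 1 N, F m) = coeff i (A * ∏ m ∈ Icc 1 i, F m) := by
  have htail : X ^ (i + 1) ∣ (∏ m ∈ Ioc i N, F m) - 1 := by
    refine prod_induction _ (fun x => X ^ (i + 1) ∣ x - 1) (fun x y hx hy => ?_) (by simp)
      fun m hm => (pow_dvd_pow X (mem_Ioc.1 hm).1).trans (hF m)
    rw [show x * y - 1 = x * (y - 1) + (x - 1) by ring]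
    exact dvd_add (dvd_mul_of_dvd_right hy x) hx
  have hIcc (n : ℕ) : Icc 1 n = Ioc 0 n := Icc_succ_left_eq_Ioc 0 n
  rw [← sub_eq_zero, ← map_sub, hIcc, hIcc, ← prod_Ioc_consecutive _ (Nat.zero_le i) hi,
    show A * ((∏ m ∈ Ioc 0 i, F m) * ∏ m ∈ Ioc i N, F m) - A * ∏ m ∈ Ioc 0 i, F m
      = A * (∏ m ∈ Ioc 0 i, F m) * ((∏ m ∈ Ioc i N, F m) - 1) by ring]
  exact X_pow_dvd_iff.1 (dvd_mul_of_dvd_right htail _) i (Nat.lt_succ_self i)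

noncomputable def geom (c : ℕ) : R⟦X⟧ := mk fun i => if c ∣ i then 1 else 0

@[simp] theorem coeff_geom (c n : ℕ) : coeff n (geom c : R⟦X⟧) = if c ∣ n then 1 else 0 :=
  coeff_mk _ _

theorem expand_geom (p : ℕ) (hp : p ≠ 0) (c : ℕ) :
    expand p hp (geom c : R⟦X⟧) = geom (p * c) := by
  ext n
  rw [coeff_expand, coeff_geom]
  by_cases h : p ∣ n
  · simp [h, Nat.dvd_div_iff_mul_dvd h]
  · simp only [h, if_false, coeff_geom]
    exact (if_neg fun h' => h (dvd_of_mul_right_dvd h')).symm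

theorem map_geom {S : Type*} [CommRing S] (ρ : R →+* S) (c : ℕ) :
    map ρ (geom c : R⟦X⟧) = geom c := by
  ext n
  rw [coeff_map, coeff_geom, coeff_geom]
  split_ifs <;> simp

theorem one_sub_X_pow_mul_geom {c : ℕ} (hc : c ≠ 0) : (1 - X ^ c : R⟦X⟧) * geom c = 1 := by
  have hgeom : geom c = expand c hc (mk 1 : R⟦X⟧) := by
    ext n; rw [coeff_expand, coeff_geom]; split_ifs <;> simp
  rw [hgeom, ← expand_X c hc, ← map_one (expand c hc), ← map_sub, ← map_mul, mul_comm,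
    mk_one_mul_one_sub_eq_one, map_one]

theorem coeff_X_pow_mul_geom {c n : ℕ} (hc : c ≠ 0) (hn : n ≠ 0) :
    coeff n (X ^ c * geom c : R⟦X⟧) = if c ∣ n then 1 else 0 := by
  have h : (X ^ c * geom c : R⟦X⟧) = geom c - 1 := by
    linear_combination -(one_sub_X_pow_mul_geom (R := R) hc)
  rw [h, map_sub, coeff_geom, coeff_one, if_neg hn, sub_zero]

noncomputable def eulerOp : Derivation R R⟦X⟧ R⟦X⟧ := (X : R⟦X⟧) • derivative R

theorem coeff_eulerOp (n : ℕ) (f : R⟦X⟧) : coeff n (eulerOp f) = n * coeff n f := by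
  rw [eulerOp, Derivation.smul_apply, smul_eq_mul]
  rcases n with _ | n
  · simp
  · rw [coeff_succ_X_mul, coeff_derivative]; push_cast; ring

theorem eulerOp_X_pow (c : ℕ) : eulerOp (X ^ c : R⟦X⟧) = (c : R⟦X⟧) * X ^ c := by
  ext n
  rw [coeff_eulerOp, ← map_natCast (C (R := R)), coeff_C_mul, coeff_X_pow]
  split_ifs with h <;> simp [h]

theorem eulerOp_geom {c : ℕ} (hc : c ≠ 0) :
    eulerOp (geom c : R⟦X⟧) = geom c * ((c : R⟦X⟧) * X ^ c * geom c) := by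
  rw [(eulerOp (R := R)).leibniz_of_mul_eq_one ((mul_comm _ _).trans (one_sub_X_pow_mul_geom hc)),
    map_sub, Derivation.map_one_eq_zero, eulerOp_X_pow, smul_eq_mul]
  ring

section Truncated

noncomputable def geomProd (c N : ℕ) : R⟦X⟧ := ∏ m ∈ Icc 1 N, geom (c * m)

noncomputable def lambert (c N : ℕ) : R⟦X⟧ :=
  ∑ m ∈ Icc 1 N, (m : R⟦X⟧) * X ^ (c * m) * geom (c * m)

variable {c : ℕ} (N : ℕ)

theorem prod_one_sub_X_pow_mul_geomProd (hc : c ≠ 0) :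
    (∏ m ∈ Icc 1 N, (1 - X ^ (c * m))) * (geomProd c N : R⟦X⟧) = 1 := by
  rw [geomProd, ← prod_mul_distrib]
  exact prod_eq_one fun m hm =>
    one_sub_X_pow_mul_geom (mul_ne_zero hc (by rw [mem_Icc] at hm; omega))

theorem eulerOp_geomProd (hc : c ≠ 0) :
    eulerOp (geomProd c N : R⟦X⟧) = geomProd c N * ((c : R⟦X⟧) * lambert c N) := by
  rw [geomProd, (eulerOp (R := R)).map_prod_of_eq_mul _ fun m hm =>
    eulerOp_geom (mul_ne_zero hc (by rw [mem_Icc] at hm; omega))]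
  congr 1
  rw [lambert, mul_sum]
  refine sum_congr rfl fun m _ => ?_
  push_cast
  ring

theorem expand_geomProd (p : ℕ) (hp : p ≠ 0) :
    expand p hp (geomProd c N : R⟦X⟧) = geomProd (p * c) N := by
  simp only [geomProd, map_prod, expand_geom, mul_assoc]

theorem map_geomProd {S : Type*} [CommRing S] (ρ : R →+* S) :
    map ρ (geomProd c N : R⟦X⟧) = geomProd c N := by
  simp only [geomProd, map_prod, map_geom]

theorem coeff_lambert (hc : c ≠ 0) {n : ℕ} (hn : n ≠ 0) :
    coeff n (lambert c N : R⟦X⟧) = ∑ m ∈ Icc 1 N with c * m ∣ n, (m : R) := by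
  rw [lambert, map_sum, sum_filter]
  refine sum_congr rfl fun m hm => ?_
  rw [mul_assoc, ← map_natCast (C (R := R)), coeff_C_mul,
    coeff_X_pow_mul_geom (mul_ne_zero hc (by rw [mem_Icc] at hm; omega)) hn]
  split_ifs <;> simp

theorem coeff_lambert_two_eq_zero_of_odd {n : ℕ} (hn : Odd n) :
    coeff n (lambert 2 N : R⟦X⟧) = 0 := by
  rw [coeff_lambert N two_ne_zero (by rintro rfl; simp at hn), filter_false_of_mem, sum_empty]
  intro m _ h
  exact Nat.not_even_iff_odd.2 hn (even_iff_two_dvd.2 (dvd_of_mul_right_dvd h))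

theorem coeff_lambert_one_of_le {n : ℕ} (hn : n ≠ 0) (hnN : n ≤ N) :
    coeff n (lambert 1 N : R⟦X⟧) = ∑ m ∈ n.divisors, (m : R) := by
  rw [coeff_lambert N one_ne_zero hn]
  congr 1
  ext m
  simp only [one_mul, mem_filter, mem_Icc, Nat.mem_divisors]
  constructor
  · exact fun ⟨_, h⟩ => ⟨h, hn⟩
  · exact fun ⟨h, _⟩ =>
      ⟨⟨Nat.pos_of_dvd_of_pos h (by omega), (Nat.le_of_dvd (by omega) h).trans hnN⟩, h⟩

end Truncated

theorem coeff_expand_mul_eq_zero (p : ℕ) (hp : p ≠ 0) (f g : R⟦X⟧) {n : ℕ}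
    (hg : ∀ a ≤ n, a ≡ n [MOD p] → coeff a g = 0) : coeff n (expand p hp f * g) = 0 := by
  rw [coeff_mul]
  refine sum_eq_zero fun ⟨i, a⟩ hia => ?_
  rw [HasAntidiagonal.mem_antidiagonal] at hia
  by_cases hi : p ∣ i
  · have ha : a ≡ n [MOD p] := by
      simpa [← hia, add_comm] using ((Nat.modEq_zero_iff_dvd.2 hi).add_left a).symm
    rw [hg a (by omega) ha, mul_zero]
  · rw [coeff_expand_of_not_dvd p hp f hi, zero_mul]

theorem expand_zmod_eq_pow (p : ℕ) [Fact p.Prime] (f : (ZMod p)⟦X⟧) :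
    expand p (Fact.out : p.Prime).ne_zero f = f ^ p := by
  have h := MvPowerSeries.map_frobenius_expand p (Fact.out : p.Prime).ne_zero (f := f)
  rwa [ZMod.frobenius_zmod, MvPowerSeries.map_id] at h

theorem geomProd_sq_mul_pow_eq_expand (N j : ℕ) :
    (geomProd 1 N ^ 2 * geomProd 2 N ^ (2 * j + 1) : (ZMod 2)⟦X⟧)
      = expand 4 (by norm_num) (geomProd 1 N ^ (j + 1)) := by
  have h2 : (geomProd 2 N : (ZMod 2)⟦X⟧) = expand 2 two_ne_zero (geomProd 1 N) := by
    rw [expand_geomProd]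
  rw [← expand_zmod_eq_pow, ← h2, ← pow_succ', show 2 * j + 1 + 1 = 2 * (j + 1) by ring,
    pow_mul', h2, ← map_pow, ← expand_zmod_eq_pow, ← expand_mul]

theorem coeff_geomProd_sq_mul_pow_eq_zero {N : ℕ} (hN : N % 4 = 3) (j : ℕ) :
    coeff N (geomProd 1 N ^ 2 * geomProd 2 N ^ (2 * j + 1) : (ZMod 4)⟦X⟧) = 0 := by
  set T : (ZMod 4)⟦X⟧ := geomProd 1 N ^ 2 * geomProd 2 N ^ (2 * j + 1)
  set U : (ZMod 4)⟦X⟧ := lambert 1 N + ((2 * j + 1 : ℕ) : (ZMod 4)⟦X⟧) * lambert 2 N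
  have hθ : eulerOp T = 2 * (T * U) := by
    rw [Derivation.leibniz,
      (eulerOp (R := ZMod 4)).map_pow_of_eq_mul (eulerOp_geomProd N one_ne_zero),
      (eulerOp (R := ZMod 4)).map_pow_of_eq_mul (eulerOp_geomProd N two_ne_zero)]
    simp only [smul_eq_mul, T, U]
    push_cast
    ring
  have hcoeff : 3 * coeff N T = 2 * coeff N (T * U) := by
    have hN3 : (N : ZMod 4) = 3 := by rw [← ZMod.natCast_mod, hN]; rfl
    have h := congrArg (coeff N) hθ
    rwa [coeff_eulerOp, hN3, ← map_ofNat C 2, coeff_C_mul] at h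
  set ρ : ZMod 4 →+* ZMod 2 := ZMod.castHom (by norm_num) (ZMod 2)
  have hTU : ρ (coeff N (T * U)) = 0 := by
    have hT : map ρ T = expand 4 (by norm_num) (geomProd 1 N ^ (j + 1)) := by
      simp only [T, map_mul, map_pow, map_geomProd, geomProd_sq_mul_pow_eq_expand]
    rw [← coeff_map, map_mul, hT]
    refine coeff_expand_mul_eq_zero _ _ _ _ fun a haN ha => ?_
    have ha3 : a % 4 = 3 := Eq.trans ha hN
    rw [coeff_map, map_add, ← map_natCast C, coeff_C_mul,
      coeff_lambert_two_eq_zero_of_odd N (Nat.odd_iff.2 (by omega)), mul_zero, add_zero,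
      coeff_lambert_one_of_le N (by omega) haN, map_sum]
    simp only [map_natCast]
    exact Nat.sum_divisors_cast_zmod_two_eq_zero ha3
  have key : ∀ t s : ZMod 4, 3 * t = 2 * s → ρ s = 0 → t = 0 := by decide
  exact key _ _ hcoeff hTU

theorem X_pow_dvd_sub_geomProd_of_X_pow_dvd {f : (ZMod 4)⟦X⟧} {N j : ℕ}
    (h : X ^ (N + 1) ∣ f * ∏ m ∈ Icc 1 N, (1 - X ^ m) ^ (3 * (4 * j + 3) + 1)
      - ∏ m ∈ Icc 1 N, (1 - X ^ (2 * m)) ^ (4 * j + 3)) :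
    X ^ (N + 1) ∣ f - geomProd 1 N ^ 2 * geomProd 2 N ^ (2 * j + 1) := by
  have h4 : (4 : (ZMod 4)⟦X⟧) = 0 := by rw [← map_ofNat C 4]; exact map_zero C
  have hfactor : ∀ m, (1 - X ^ m : (ZMod 4)⟦X⟧) ^ (3 * (4 * j + 3) + 1)
      = (1 - X ^ (1 * m)) ^ 2 * (1 - X ^ (2 * m)) ^ (6 * j + 4) := by
    intro m
    have hfour : (1 - X ^ m : (ZMod 4)⟦X⟧) ^ 4 = (1 - X ^ (2 * m)) ^ 2 := by
      rw [mul_comm, pow_mul]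
      linear_combination (-(X ^ m) * (1 - X ^ m) ^ 2 : (ZMod 4)⟦X⟧) * h4
    rw [one_mul, show 3 * (4 * j + 3) + 1 = 2 + 4 * (3 * j + 2) by ring, pow_add, pow_mul, hfour,
      ← pow_mul]
    ring
  rw [prod_congr rfl fun m _ => hfactor m, prod_mul_distrib, prod_pow, prod_pow, prod_pow] at h
  have h1 := prod_one_sub_X_pow_mul_geomProd (R := ZMod 4) N one_ne_zero
  have h2 := prod_one_sub_X_pow_mul_geomProd (R := ZMod 4) N two_ne_zero
  set E1 := ∏ m ∈ Icc 1 N, (1 - X ^ (1 * m) : (ZMod 4)⟦X⟧)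
  set E2 := ∏ m ∈ Icc 1 N, (1 - X ^ (2 * m) : (ZMod 4)⟦X⟧)
  set G1 : (ZMod 4)⟦X⟧ := geomProd 1 N
  set G2 : (ZMod 4)⟦X⟧ := geomProd 2 N
  have hsub : f - G1 ^ 2 * G2 ^ (2 * j + 1)
      = (f * (E1 ^ 2 * E2 ^ (6 * j + 4)) - E2 ^ (4 * j + 3)) * (G1 ^ 2 * G2 ^ (6 * j + 4)) :=
    calc f - G1 ^ 2 * G2 ^ (2 * j + 1)
        = f * ((E1 * G1) ^ 2 * (E2 * G2) ^ (6 * j + 4))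
          - G1 ^ 2 * G2 ^ (2 * j + 1) * (E2 * G2) ^ (4 * j + 3) := by
          rw [h1, h2]; simp
      _ = _ := by ring
  rw [hsub]
  exact dvd_mul_of_dvd_left h _

end PowerSeries

theorem ElongatedDiamondGF.X_pow_dvd {R : Type*} [CommRing R] {d : ℕ → ℕ → ℤ}
    (hd : ElongatedDiamondGF d) {k : ℕ} (hk : 1 ≤ k) (N : ℕ) :
    (X : R⟦X⟧) ^ (N + 1) ∣ mk (fun i => (d k i : R)) * ∏ m ∈ Icc 1 N, (1 - X ^ m) ^ (3 * k + 1)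
      - ∏ m ∈ Icc 1 N, (1 - X ^ (2 * m)) ^ k := by
  have hZ : (X : ℤ⟦X⟧) ^ (N + 1) ∣ mk (fun i => d k i) * ∏ m ∈ Icc 1 N, (1 - X ^ m) ^ (3 * k + 1)
      - ∏ m ∈ Icc 1 N, (1 - X ^ (2 * m)) ^ k := by
    refine X_pow_dvd_iff.2 fun i hi => ?_
    have hiN : i ≤ N := Nat.lt_succ_iff.1 hi
    rw [map_sub, sub_eq_zero,
      coeff_mul_prod_Icc_of_le (fun m => X_pow_dvd_one_sub_X_pow_pow_sub_one le_rfl _) _ hiN,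
      ← one_mul (∏ m ∈ Icc 1 N, _),
      coeff_mul_prod_Icc_of_le (fun m => X_pow_dvd_one_sub_X_pow_pow_sub_one (by omega) _) _ hiN,
      one_mul]
    exact hd k hk i
  have hmk : map (Int.castRingHom R) (mk fun i => d k i) = mk fun i => (d k i : R) := by
    ext; simp
  simpa [hmk] using map_dvd (map (Int.castRingHom R)) hZ

theorem stmt_5 (d : ℕ → ℕ → ℤ) (hd : ElongatedDiamondGF d) :
    ∀ n j : ℕ, (4 : ℤ) ∣ d (4 * j + 3) (4 * n + 3) := by
  intro n j
  have hT := X_pow_dvd_sub_geomProd_of_X_pow_dvd (j := j)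
    (hd.X_pow_dvd (R := ZMod 4) (k := 4 * j + 3) (by omega) (4 * n + 3))
  have hcoeff := X_pow_dvd_iff.1 hT (4 * n + 3) (Nat.lt_succ_self _)
  rw [map_sub, coeff_mk, coeff_geomProd_sq_mul_pow_eq_zero (by omega), sub_zero] at hcoeff
  exact (ZMod.intCast_zmod_eq_zero_iff_dvd _ 4).1 hcoeff
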